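/- arXiv:2507.03104 — 6 statements merged into one kernel-verified Lean document; each statement's English description precedes it below -/
import Mathlib

section
/- For every simple mixed graph G on n vertices, the integrated Laplacian matrix 𝓘ᴸ(G) is positive semidefinite. -/
set_option linter.unusedSectionVars false

open Matrix Finset Polynomial

variable {V : Type*} [Fintype V] [DecidableEq V]

/-- Undirected adjacency matrix of the mixed graph with edge-multiplicity function `E`:
`(u,v)`-entry `E u v` for `u ≠ v`, and `(v,v)`-entry `2 * E v v`. -/
def Au (E : V → V → ℕ) : Matrix V V ℝ :=
  Matrix.of fun u v => if u = v then ((2 * E v v : ℕ) : ℝ) else ((E u v : ℕ) : ℝ)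

/-- Arc matrix of the mixed graph with arc-multiplicity function `A`. -/
def Bm (A : V → V → ℕ) : Matrix V V ℝ := Matrix.of fun u v => ((A u v : ℕ) : ℝ)

/-- Undirected degree `d v`. -/
def dU (E : V → V → ℕ) (v : V) : ℕ :=
  (∑ u ∈ Finset.univ.filter (fun u => u ≠ v), E v u) + 2 * E v v

/-- Out-degree `d⁺ v`. -/
def dOut (A : V → V → ℕ) (v : V) : ℕ := ∑ u, A v u

/-- In-degree `d⁻ v`. -/
def dIn (A : V → V → ℕ) (v : V) : ℕ := ∑ u, A u v

/-- Integrated adjacency matrix `𝓘(G) = [[Aᵤ, B], [Bᵀ, Aᵤ]]`. -/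
def intAdj (E A : V → V → ℕ) : Matrix (V ⊕ V) (V ⊕ V) ℝ :=
  Matrix.fromBlocks (Au E) (Bm A) (Bm A)ᵀ (Au E)

/-- Integrated degree matrix `𝓘ᴰ(G)`. -/
def intDeg (E A : V → V → ℕ) : Matrix (V ⊕ V) (V ⊕ V) ℝ :=
  Matrix.diagonal (Sum.elim (fun v => ((dU E v + dOut A v : ℕ) : ℝ))
    (fun v => ((dU E v + dIn A v : ℕ) : ℝ)))

/-- Integrated Laplacian matrix `𝓘ᴸ(G) = 𝓘ᴰ(G) - 𝓘(G)`. -/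
def intLap (E A : V → V → ℕ) : Matrix (V ⊕ V) (V ⊕ V) ℝ := intDeg E A - intAdj E A

/-- Integrated signless Laplacian matrix `𝓘Q(G) = 𝓘ᴰ(G) + 𝓘(G)`. -/
def intQ (E A : V → V → ℕ) : Matrix (V ⊕ V) (V ⊕ V) ℝ := intDeg E A + intAdj E A

/-- A mixed graph is simple: multiplicities at most 1, no loops, no directed loops. -/
def IsSimple (E A : V → V → ℕ) : Prop :=
  (∀ u v, E u v ≤ 1) ∧ (∀ u v, A u v ≤ 1) ∧ (∀ v, E v v = 0) ∧ (∀ v, A v v = 0)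

/-- Number of edges (excluding loops): `e(G) = (1/2)·Σ_{u ≠ v} E u v`. -/
noncomputable def numEdges (E : V → V → ℕ) : ℝ :=
  (∑ u, ∑ v ∈ Finset.univ.filter (fun v => v ≠ u), (E u v : ℝ)) / 2

/-- Number of loops: `l(G) = Σ_v E v v`. -/
noncomputable def numLoops (E : V → V → ℕ) : ℝ := ∑ v, (E v v : ℝ)

/-- Number of arcs (including directed loops): `a(G) = Σ_{u,v} A u v`. -/
noncomputable def numArcs (A : V → V → ℕ) : ℝ := ∑ u, ∑ v, (A u v : ℝ)

lemma intAdj_isHermitian (E A : V → V → ℕ) (hE : ∀ u v, E u v = E v u) :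
    (intAdj E A).IsHermitian := by
  have hAu : (Au E)ᵀ = Au E := by
    ext u v
    by_cases h : u = v
    · subst h; rfl
    · simp [Au, Matrix.transpose_apply, h, Ne.symm h, hE u v]
  show (intAdj E A)ᴴ = intAdj E A
  rw [Matrix.conjTranspose_eq_transpose_of_trivial]
  unfold intAdj
  rw [Matrix.fromBlocks_transpose, hAu, Matrix.transpose_transpose]

lemma intLap_isHermitian (E A : V → V → ℕ) (hE : ∀ u v, E u v = E v u) :
    (intLap E A).IsHermitian :=
  (Matrix.isHermitian_diagonal _).sub (intAdj_isHermitian E A hE)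

lemma intQ_isHermitian (E A : V → V → ℕ) (hE : ∀ u v, E u v = E v u) :
    (intQ E A).IsHermitian :=
  (Matrix.isHermitian_diagonal _).add (intAdj_isHermitian E A hE)

/-- The non-increasing rearrangement of a finite tuple of reals. -/
noncomputable def sortDesc {N : ℕ} (f : Fin N → ℝ) : Fin N → ℝ :=
  fun i => (f ∘ Tuple.sort f) i.rev

/-- The eigenvalues of the integrated Laplacian matrix `𝓘ᴸ(G)`, in non-increasing order:
`nuT E A hE i` is `ν_{i+1}(G)` (0-indexed). -/
noncomputable def nuT {n : ℕ} (E A : Fin n → Fin n → ℕ) (hE : ∀ u v, E u v = E v u) :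
    Fin (n + n) → ℝ :=
  sortDesc (fun i => (intLap_isHermitian E A hE).eigenvalues (finSumFinEquiv.symm i))

/-- The eigenvalues of the integrated signless Laplacian matrix `𝓘Q(G)`, in non-increasing
order: `xiT E A hE i` is `ξ_{i+1}(G)` (0-indexed). -/
noncomputable def xiT {n : ℕ} (E A : Fin n → Fin n → ℕ) (hE : ∀ u v, E u v = E v u) :
    Fin (n + n) → ℝ :=
  sortDesc (fun i => (intQ_isHermitian E A hE).eigenvalues (finSumFinEquiv.symm i))

/-- The eigenvalues of the integrated adjacency matrix `𝓘(G)`, in non-increasing order: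
`lamT E A hE i` is `λ_{i+1}(G)` (0-indexed). -/
noncomputable def lamT {n : ℕ} (E A : Fin n → Fin n → ℕ) (hE : ∀ u v, E u v = E v u) :
    Fin (n + n) → ℝ :=
  sortDesc (fun i => (intAdj_isHermitian E A hE).eigenvalues (finSumFinEquiv.symm i))

/-!
The row sums of `𝓘(G)` are exactly the integrated degrees (a loop contributes `2` both to the
degree and to the diagonal of `Aᵤ`), so `𝓘ᴸ(G)` is the Laplacian `diag(M𝟙) - M` of the symmetric
matrix `M = 𝓘(G)` with nonnegative entries, viewed as a weighted graph on `V ⊕ V`. Its quadratic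
form is `½ ∑ᵢⱼ Mᵢⱼ (xᵢ - xⱼ)² ≥ 0`.
-/

section WeightedLaplacian

variable {ι R : Type*} [Fintype ι] [DecidableEq ι]

theorem two_mul_dotProduct_diagonal_rowSum_sub_mulVec [CommRing R] [StarRing R] [TrivialStar R]
    {M : Matrix ι ι R} (hM : M.IsHermitian) (x : ι → R) :
    2 * (x ⬝ᵥ ((diagonal fun i => ∑ j, M i j) - M) *ᵥ x) =
      ∑ i, ∑ j, M i j * (x i - x j) ^ 2 := by
  have hswap : ∑ i, ∑ j, M i j * x j ^ 2 = ∑ i, ∑ j, M i j * x i ^ 2 := by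
    rw [Finset.sum_comm]
    exact Finset.sum_congr rfl fun i _ => Finset.sum_congr rfl fun j _ => by
      rw [← hM.apply i j, star_trivial]
  have hdiag : x ⬝ᵥ (diagonal (fun i => ∑ j, M i j) *ᵥ x) = ∑ i, ∑ j, M i j * x i ^ 2 := by
    simp only [mulVec_diagonal, dotProduct, Finset.sum_mul, Finset.mul_sum]
    exact Finset.sum_congr rfl fun i _ => Finset.sum_congr rfl fun j _ => by ring
  have hoff : x ⬝ᵥ (M *ᵥ x) = ∑ i, ∑ j, M i j * (x i * x j) := by
    simp only [mulVec, dotProduct, Finset.mul_sum]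
    exact Finset.sum_congr rfl fun i _ => Finset.sum_congr rfl fun j _ => by ring
  have hexpand : ∑ i, ∑ j, M i j * (x i - x j) ^ 2 =
      ∑ i, ∑ j, M i j * x i ^ 2 + ∑ i, ∑ j, M i j * x j ^ 2
        - 2 * ∑ i, ∑ j, M i j * (x i * x j) := by
    simp only [Finset.mul_sum, ← Finset.sum_add_distrib, ← Finset.sum_sub_distrib]
    exact Finset.sum_congr rfl fun i _ => Finset.sum_congr rfl fun j _ => by ring
  rw [sub_mulVec, dotProduct_sub, hdiag, hoff, hexpand, hswap]
  ring

theorem posSemidef_diagonal_rowSum_sub [CommRing R] [LinearOrder R] [IsStrictOrderedRing R]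
    [StarRing R] [TrivialStar R] {M : Matrix ι ι R} (hM : M.IsHermitian)
    (hM₀ : ∀ i j, 0 ≤ M i j) : ((diagonal fun i => ∑ j, M i j) - M).PosSemidef := by
  refine .of_dotProduct_mulVec_nonneg ((isHermitian_diagonal _).sub hM) fun x => ?_
  have hsum : 0 ≤ ∑ i, ∑ j, M i j * (x i - x j) ^ 2 :=
    Finset.sum_nonneg fun i _ => Finset.sum_nonneg fun j _ => mul_nonneg (hM₀ i j) (sq_nonneg _)
  rw [← two_mul_dotProduct_diagonal_rowSum_sub_mulVec hM] at hsum
  rw [star_trivial]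
  linarith

end WeightedLaplacian

theorem sum_Au_apply_eq_dU (E : V → V → ℕ) (u : V) : ∑ v, Au E u v = dU E u := by
  rw [dU, Finset.filter_ne', ← Finset.add_sum_erase _ _ (Finset.mem_univ u), add_comm]
  push_cast
  congr 1
  · exact Finset.sum_congr rfl fun v hv => by simp [Au, (Finset.ne_of_mem_erase hv).symm]
  · simp [Au]

theorem intDeg_eq_diagonal_rowSum (E A : V → V → ℕ) :
    intDeg E A = diagonal fun i => ∑ j, intAdj E A i j := by
  rw [intDeg]
  congr 1
  funext i
  rcases i with u | u
  · simp [intAdj, Fintype.sum_sum_type, sum_Au_apply_eq_dU, Bm, dOut]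
  · simp [intAdj, Fintype.sum_sum_type, sum_Au_apply_eq_dU, Bm, dIn, add_comm]

theorem intAdj_nonneg (E A : V → V → ℕ) (i j : V ⊕ V) : 0 ≤ intAdj E A i j := by
  rcases i with u | u <;> rcases j with v | v <;> simp [intAdj, Au, Bm] <;> positivity

theorem stmt0_general (n : ℕ) (E A : Fin n → Fin n → ℕ) (hE : ∀ u v, E u v = E v u) :
    (intLap E A).PosSemidef := by
  rw [intLap, intDeg_eq_diagonal_rowSum]
  exact posSemidef_diagonal_rowSum_sub (intAdj_isHermitian E A hE) (intAdj_nonneg E A)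

/-- For every simple mixed graph `G` on `n` vertices, the integrated Laplacian
matrix `𝓘ᴸ(G)` is positive semidefinite. -/
theorem stmt0 (n : ℕ) (E A : Fin n → Fin n → ℕ) (hE : ∀ u v, E u v = E v u)
    (hS : IsSimple E A) : (intLap E A).PosSemidef :=
  stmt0_general n E A hE
end

section
/- Let k, m ≥ 1 and let K^M_{k(m)} be the complete k-partite mixed graph with parts of size m: vertex set Fin k × Fin m, with E((i,a),(j,b)) = 1 and A((i,a),(j,b)) = 1 when i ≠ j, and both equal to 0 when i = j. Then the characteristic polynomial of 𝓘ᴸ(K^M_{k(m)}) equals x · (x − 2mk)^{k−1} · (x − (2mk − 2m))^{2mk−k}; equivalently, the eigenvalues of 𝓘ᴸ(K^M_{k(m)}) are 0 with multiplicity 1, 2mk with multiplicity k−1, and 2mk−2m with multiplicity 2mk−k. -/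
/-!
Both copies of a vertex `(i, a)` have integrated degree `c = 2mk - 2m`, and two vertices of
`V ⊕ V` are joined in `𝓘(G)` by a single edge exactly when their part indices differ. So, once
`V ⊕ V` is regrouped into the `k` classes of size `2m` sharing a part index, `𝓘ᴸ` becomes
`c • 1 - J + P`, the Laplacian of the complete `k`-partite graph with parts of size `2m`; here
`J = of 1` and `P` is block diagonal with all-ones blocks. Since `P J = 2m J`, the matrix
determinant lemma gives `det (r • 1 - 𝓘ᴸ) = det (a • 1 - P) (1 + 2mk / (a - 2m))` with
`a = r - c`, while `det (a • 1 - P) = (a ^ (2m - 1) (a - 2m)) ^ k`. Both sides of the claim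
therefore agree at all but two values of `r`.
-/

set_option linter.unusedSectionVars false

open Matrix Finset Polynomial

variable {V : Type*} [Fintype V] [DecidableEq V]

namespace Matrix

variable {ι ι' κ F R K : Type*}

def fiberIndicator [DecidableEq κ] [Zero R] [One R] (g : ι → κ) : Matrix ι ι R :=
  of fun i j => if g i = g j then 1 else 0

section CommRing

variable [CommRing R]

theorem smul_of_one_eq_replicateCol_mul_replicateRow [Fintype ι] (t : R) :
    t • (of 1 : Matrix ι ι R) =
      replicateCol Unit (fun _ : ι => t) * replicateRow Unit (fun _ : ι => (1 : R)) := by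
  ext
  simp [mul_apply]

theorem det_one_add_smul_of_one [Fintype ι] [DecidableEq ι] (t : R) :
    det (1 + t • (of 1 : Matrix ι ι R)) = 1 + t * Fintype.card ι := by
  rw [smul_of_one_eq_replicateCol_mul_replicateRow, det_one_add_replicateCol_mul_replicateRow]
  simp [dotProduct, mul_comm]

theorem submatrix_smul_one_sub_of_one_add_fiberIndicator [DecidableEq ι] [DecidableEq ι']
    [DecidableEq κ] (c : R) (g : ι → κ) (e : ι' ≃ ι) :
    (c • (1 : Matrix ι ι R) - of 1 + fiberIndicator g).submatrix e e =
      c • 1 - of 1 + fiberIndicator (g ∘ e) := by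
  ext i j
  simp [fiberIndicator, one_apply]

theorem blockDiagonal_const_of_one [DecidableEq κ] :
    blockDiagonal (fun _ : κ => (of 1 : Matrix F F R)) = fiberIndicator Prod.snd := by
  ext ⟨i, c⟩ ⟨j, d⟩
  simp [blockDiagonal_apply, fiberIndicator]

theorem fiberIndicator_snd_mul_of_one [Fintype F] [Fintype κ] [DecidableEq κ] :
    fiberIndicator Prod.snd * (of 1 : Matrix (F × κ) (F × κ) R) =
      (Fintype.card F : R) • of 1 := by
  ext ⟨i, c⟩ ⟨j, d⟩
  simp only [mul_apply, fiberIndicator, of_apply, Pi.one_apply, mul_one, Fintype.sum_prod_type]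
  simp

end CommRing

section Field

variable [Field K]

theorem det_add_smul_of_one [Fintype ι] [DecidableEq ι] {M : Matrix ι ι K} {μ : K}
    (hM : M * of 1 = μ • of 1) (hμ : μ ≠ 0) (b : K) :
    det (M + b • of 1) = det M * (1 + b * Fintype.card ι / μ) := by
  have hfactor : M + b • of 1 = M * (1 + (b / μ) • of 1) := by
    rw [Matrix.mul_add, Matrix.mul_one, Matrix.mul_smul, hM, smul_smul, div_mul_cancel₀ _ hμ]
  rw [hfactor, det_mul, det_one_add_smul_of_one, div_mul_eq_mul_div]

theorem det_smul_one_sub_of_one [Fintype ι] [DecidableEq ι] [Nonempty ι] {a : K} (ha : a ≠ 0) :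
    det (a • 1 - of 1 : Matrix ι ι K) = a ^ (Fintype.card ι - 1) * (a - Fintype.card ι) := by
  have hM : (a • 1 : Matrix ι ι K) * of 1 = a • of 1 := by rw [smul_mul, Matrix.one_mul]
  rw [sub_eq_add_neg, ← neg_one_smul K (of 1), det_add_smul_of_one hM ha, det_smul, det_one]
  obtain ⟨n, hn⟩ := Nat.exists_eq_add_one_of_ne_zero (Fintype.card_ne_zero (α := ι))
  rw [hn, Nat.add_sub_cancel, pow_succ]
  field_simp
  ring

variable [Fintype F] [DecidableEq F] [Nonempty F] [Fintype κ] [DecidableEq κ]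

theorem det_smul_one_sub_fiberIndicator_snd {a : K} (ha : a ≠ 0) :
    det (a • 1 - fiberIndicator (Prod.snd : F × κ → κ)) =
      (a ^ (Fintype.card F - 1) * (a - Fintype.card F)) ^ Fintype.card κ := by
  rw [← blockDiagonal_const_of_one, ← blockDiagonal_one, ← blockDiagonal_smul,
    ← blockDiagonal_sub, det_blockDiagonal]
  show ∏ _c : κ, det (a • 1 - of 1 : Matrix F F K) = _
  rw [Finset.prod_const, Finset.card_univ, det_smul_one_sub_of_one ha]

theorem det_smul_one_sub_fiberIndicator_snd_add_of_one {a : K} (ha : a ≠ 0)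
    (has : a - Fintype.card F ≠ 0) :
    det (a • 1 - fiberIndicator (Prod.snd : F × κ → κ) + of 1) =
      (a ^ (Fintype.card F - 1) * (a - Fintype.card F)) ^ Fintype.card κ *
        (1 + Fintype.card F * Fintype.card κ / (a - Fintype.card F)) := by
  have hrowSum : (a • 1 - fiberIndicator Prod.snd) * (of 1 : Matrix (F × κ) (F × κ) K) =
      (a - Fintype.card F) • of 1 := by
    rw [Matrix.sub_mul, smul_mul, Matrix.one_mul, fiberIndicator_snd_mul_of_one, sub_smul]
  rw [← one_smul K (of 1 : Matrix (F × κ) (F × κ) K), det_add_smul_of_one hrowSum has,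
    det_smul_one_sub_fiberIndicator_snd ha, Fintype.card_prod, one_mul, Nat.cast_mul]

theorem charpoly_smul_one_sub_of_one_add_fiberIndicator_snd [Infinite K] [Nonempty κ] :
    ((Fintype.card F * Fintype.card κ - Fintype.card F : K) • (1 : Matrix (F × κ) (F × κ) K) -
        of 1 + fiberIndicator Prod.snd).charpoly =
      X * (X - C (Fintype.card F * Fintype.card κ : K)) ^ (Fintype.card κ - 1) *
        (X - C (Fintype.card F * Fintype.card κ - Fintype.card F : K)) ^
          (Fintype.card F * Fintype.card κ - Fintype.card κ) := by
  obtain ⟨s, hs⟩ := Nat.exists_eq_add_one_of_ne_zero (Fintype.card_ne_zero (α := F))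
  obtain ⟨n, hn⟩ := Nat.exists_eq_add_one_of_ne_zero (Fintype.card_ne_zero (α := κ))
  have hexp : (s + 1) * (n + 1) - (n + 1) = s * (n + 1) := by
    rw [Nat.succ_mul, Nat.add_sub_cancel]
  rw [hs, hn, Nat.add_sub_cancel, hexp]
  set c : K := ((s + 1 : ℕ) * (n + 1 : ℕ) - (s + 1 : ℕ) : K)
  apply eq_of_infinite_eval_eq
  refine Set.Infinite.mono (fun r hr => ?_) (Set.toFinite {c, c + (s + 1 : ℕ)}).infinite_compl
  obtain ⟨a, rfl⟩ : ∃ a, r = a + c := ⟨r - c, by ring⟩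
  have ha : a ≠ 0 := by rintro rfl; simp at hr
  have has : a - Fintype.card F ≠ 0 := by
    rw [hs]; intro h; rw [sub_eq_zero] at h; subst h; simp [add_comm] at hr
  have hsplit : scalar _ (a + c) - (c • 1 - of 1 + fiberIndicator Prod.snd) =
      a • 1 - fiberIndicator (Prod.snd : F × κ → κ) + of 1 := by
    rw [scalar_apply, ← smul_one_eq_diagonal]
    module
  simp only [Set.mem_ofPred_eq, eval_charpoly, hsplit,
    det_smul_one_sub_fiberIndicator_snd_add_of_one ha has, eval_mul, eval_pow, eval_sub, eval_X,
    eval_C, c, hs, hn, Nat.add_sub_cancel, mul_pow, ← pow_mul]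
  rw [hs] at has
  push_cast at has ⊢
  field_simp
  ring

end Field

end Matrix

section CompleteMultipartite

variable {α κ : Type*} [DecidableEq κ]

def completeMultipartite (p : α → κ) : α → α → ℕ :=
  fun u v => if p u = p v then 0 else 1

variable (p : α → κ)

theorem dU_completeMultipartite [Fintype α] [DecidableEq α] (v : α) :
    dU (completeMultipartite p) v = dOut (completeMultipartite p) v := by
  rw [dU, dOut, filter_ne', sum_erase _ (by simp [completeMultipartite])]
  simp [completeMultipartite]

theorem dIn_completeMultipartite [Fintype α] (v : α) :
    dIn (completeMultipartite p) v = dOut (completeMultipartite p) v := by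
  simp only [dIn, dOut, completeMultipartite, eq_comm]

theorem Au_completeMultipartite [DecidableEq α] :
    Au (completeMultipartite p) = of 1 - fiberIndicator p := by
  ext u v
  by_cases huv : u = v
  · simp [Au, completeMultipartite, fiberIndicator, huv]
  · by_cases hp : p u = p v <;> simp [Au, completeMultipartite, fiberIndicator, huv, hp]

theorem Bm_completeMultipartite : Bm (completeMultipartite p) = of 1 - fiberIndicator p := by
  ext u v
  by_cases hp : p u = p v <;> simp [Bm, completeMultipartite, fiberIndicator, hp]

theorem intAdj_completeMultipartite [DecidableEq α] :
    intAdj (completeMultipartite p) (completeMultipartite p) =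
      of 1 - fiberIndicator (Sum.elim p p) := by
  rw [intAdj, Au_completeMultipartite, Bm_completeMultipartite]
  ext (u | u) (v | v) <;> simp [fiberIndicator] <;> split_ifs <;> simp_all [eq_comm]

theorem intDeg_completeMultipartite [Fintype α] [DecidableEq α] {d : ℝ}
    (hd : ∀ v, (dOut (completeMultipartite p) v : ℝ) = d) :
    intDeg (completeMultipartite p) (completeMultipartite p) = (2 * d) • 1 := by
  ext (u | u) (v | v) <;>
    simp [intDeg, diagonal_apply, one_apply, dU_completeMultipartite, dIn_completeMultipartite,
      hd, two_mul]

theorem intLap_completeMultipartite [Fintype α] [DecidableEq α] {d : ℝ}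
    (hd : ∀ v, (dOut (completeMultipartite p) v : ℝ) = d) :
    intLap (completeMultipartite p) (completeMultipartite p) =
      (2 * d) • 1 - of 1 + fiberIndicator (Sum.elim p p) := by
  rw [intLap, intDeg_completeMultipartite p hd, intAdj_completeMultipartite, sub_add]

end CompleteMultipartite

theorem dOut_completeMultipartite_fst {k m : ℕ} (v : Fin k × Fin m) :
    (dOut (completeMultipartite Prod.fst) v : ℝ) = k * m - m := by
  have hpart : #{u : Fin k × Fin m | v.1 = u.1} = m := by
    rw [show ({u | v.1 = u.1} : Finset (Fin k × Fin m)) = {v.1} ×ˢ univ by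
      ext ⟨i, b⟩; simp [eq_comm]]
    simp
  have hsplit := card_filter_add_card_filter_not (s := univ) fun u : Fin k × Fin m => v.1 = u.1
  rw [hpart, card_univ, Fintype.card_prod, Fintype.card_fin, Fintype.card_fin] at hsplit
  simp only [dOut, completeMultipartite, sum_ite, sum_const_zero, sum_const, nsmul_one, zero_add]
  rw [eq_sub_iff_add_eq, add_comm]
  exact_mod_cast hsplit

/-- the characteristic polynomial of `𝓘ᴸ(K^M_{k(m)})` is
`x · (x − 2mk)^(k−1) · (x − (2mk − 2m))^(2mk−k)`. -/
theorem stmt5 (k m : ℕ) (hk : 1 ≤ k) (hm : 1 ≤ m)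
    (E A : Fin k × Fin m → Fin k × Fin m → ℕ)
    (hEdef : ∀ p q, E p q = if p.1 = q.1 then 0 else 1)
    (hAdef : ∀ p q, A p q = if p.1 = q.1 then 0 else 1) :
    (intLap E A).charpoly =
      Polynomial.X * (Polynomial.X - Polynomial.C (2 * (m : ℝ) * k)) ^ (k - 1) *
        (Polynomial.X - Polynomial.C (2 * (m : ℝ) * k - 2 * m)) ^ (2 * m * k - k) := by
  obtain rfl : E = completeMultipartite Prod.fst := funext₂ hEdef
  obtain rfl : A = completeMultipartite Prod.fst := funext₂ hAdef
  have : Nonempty (Fin m ⊕ Fin m) := ⟨.inl ⟨0, hm⟩⟩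
  have : Nonempty (Fin k) := ⟨⟨0, hk⟩⟩
  let e : (Fin m ⊕ Fin m) × Fin k ≃ (Fin k × Fin m) ⊕ (Fin k × Fin m) :=
    (Equiv.sumProdDistrib _ _ _).trans (Equiv.sumCongr (Equiv.prodComm _ _) (Equiv.prodComm _ _))
  have hparts : Sum.elim Prod.fst Prod.fst ∘ e = Prod.snd := by
    ext ⟨a | a, i⟩ <;> rfl
  rw [← charpoly_reindex e.symm, reindex_apply, Equiv.symm_symm,
    intLap_completeMultipartite _ dOut_completeMultipartite_fst,
    submatrix_smul_one_sub_of_one_add_fiberIndicator, hparts]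
  have hcharpoly := charpoly_smul_one_sub_of_one_add_fiberIndicator_snd (K := ℝ)
    (F := Fin m ⊕ Fin m) (κ := Fin k)
  simp only [Fintype.card_sum, Fintype.card_fin, ← two_mul] at hcharpoly
  push_cast at hcharpoly
  rwa [show (2 * (k * m - m) : ℝ) = 2 * m * k - 2 * m by ring]
end

section
/- Let k, m ≥ 1 and let K^D_{k(m)} be the complete k-partite directed graph with parts of size m: vertex set Fin k × Fin m, with E ≡ 0 and A((i,a),(j,b)) = 1 when i ≠ j and 0 when i = j. Then the characteristic polynomial of 𝓘ᴸ(K^D_{k(m)}) equals (x − (2mk − 2m)) · x · (x − mk)^{k−1} · (x − (mk − 2m))^{k−1} · (x − (mk − m))^{2km−2k}; equivalently, its eigenvalues are 2mk−2m with multiplicity 1, 0 with multiplicity 1, mk with multiplicity k−1, mk−2m with multiplicity k−1, and mk−m with multiplicity 2km−2k. -/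
set_option linter.unusedSectionVars false

open Matrix Finset Polynomial

variable {V : Type*} [Fintype V] [DecidableEq V]

/-!
The arc matrix `B` of `K^D_{k(m)}` is symmetric and every vertex has in- and out-degree
`c = m(k - 1)`, so `𝓘ᴸ = [[c, -B], [-B, c]]`. Block row and column operations reduce its
characteristic polynomial to `χ(c - B) · χ(c + B)`. Finally `B = (J_k - I) ⊗ J_m` factors as
`R (J_k - I) Rᵀ` with `Rᵀ R = m I`, so by Sylvester's identity `χ(B)` is
`X^(km - k) · χ(m (J_k - I))`, whose roots `m(k - 1)` and `-m` (with multiplicity `k - 1`) come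
from the rank-one matrix `J_k`.
-/

open Kronecker

section
variable {R : Type*} [CommRing R] {n : Type*} [Fintype n] [DecidableEq n]

theorem Matrix.det_fromBlocks_self (M N : Matrix n n R) :
    (fromBlocks M N N M).det = (M + N).det * (M - N).det := by
  have h : fromBlocks 1 0 (-1) 1 * fromBlocks M N N M * fromBlocks 1 0 1 1 =
      fromBlocks (M + N) N 0 (M - N) := by
    simp only [fromBlocks_multiply, Matrix.one_mul, Matrix.mul_one, Matrix.zero_mul,
      Matrix.neg_mul, Matrix.mul_zero, add_zero, zero_add]
    congr 1 <;> abel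
  simpa [det_fromBlocks_zero₁₂, det_fromBlocks_zero₂₁] using congrArg det h

theorem Matrix.charpoly_fromBlocks_self (M N : Matrix n n R) :
    (fromBlocks M N N M).charpoly = (M + N).charpoly * (M - N).charpoly := by
  simp only [charpoly, charmatrix_fromBlocks, det_fromBlocks_self]
  congr 2 <;> simp [charmatrix, Matrix.map_add, Matrix.map_sub] <;> abel

end

section
variable {ι κ : Type*} [Fintype ι] [DecidableEq ι] [Fintype κ] [DecidableEq κ]
  {R : Type*} [CommRing R]

theorem Matrix.charpoly_kronecker_ones [Nonempty κ] (M : Matrix ι ι R) :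
    (M ⊗ₖ of fun _ _ : κ => (1 : R)).charpoly =
      X ^ (Fintype.card ι * Fintype.card κ - Fintype.card ι) *
        ((Fintype.card κ : R) • M).charpoly := by
  let P : Matrix (ι × κ) ι R := of fun p i => if p.1 = i then 1 else 0
  have hfactor : M ⊗ₖ (of fun _ _ : κ => (1 : R)) = P * (M * Pᵀ) := by
    ext p q
    simp [P, mul_apply, kroneckerMap_apply]
  have hcollapse : M * Pᵀ * P = (Fintype.card κ : R) • M := by
    ext i j
    simp [P, mul_apply, Fintype.sum_prod_type]
  have hcard : Fintype.card ι ≤ Fintype.card (ι × κ) := by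
    rw [Fintype.card_prod]
    exact Nat.le_mul_of_pos_right _ Fintype.card_pos
  rw [hfactor, charpoly_mul_comm_of_le _ _ hcard, hcollapse, Fintype.card_prod]

theorem Matrix.charpoly_smul_ones_sub_one [Nonempty ι] (a : R) :
    (a • (of (fun _ _ => 1) - 1 : Matrix ι ι R)).charpoly =
      (X - C (a * (Fintype.card ι - 1))) * (X + C a) ^ (Fintype.card ι - 1) := by
  have h : a • (of (fun _ _ => 1) - 1 : Matrix ι ι R) =
      vecMulVec (fun _ => a) 1 - scalar ι a := by
    ext i j
    by_cases hij : i = j <;> simp [hij]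
  obtain ⟨n, hn⟩ : ∃ n, Fintype.card ι = n + 1 := Nat.exists_eq_add_one.mpr Fintype.card_pos
  rw [h, charpoly_sub_scalar, charpoly_vecMulVec, hn]
  simp [dotProduct, hn, smul_eq_C_mul]
  ring

variable (ι κ R) in
def multipartiteAdj : Matrix (ι × κ) (ι × κ) R :=
  (of (fun _ _ => 1) - 1 : Matrix ι ι R) ⊗ₖ of fun _ _ : κ => 1

theorem multipartiteAdj_apply (p q : ι × κ) :
    multipartiteAdj ι κ R p q = if p.1 = q.1 then 0 else 1 := by
  by_cases h : p.1 = q.1 <;> simp [multipartiteAdj, h]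

theorem sum_multipartiteAdj_apply (p : ι × κ) :
    ∑ q, multipartiteAdj ι κ R p q = Fintype.card κ * (Fintype.card ι - 1) := by
  rw [multipartiteAdj, Fintype.sum_prod_type]
  simp [Finset.sum_sub_distrib, one_apply]
  ring

theorem charpoly_scalar_add_smul_multipartiteAdj [Nonempty ι] [Nonempty κ] (c t : R) :
    (scalar _ c + t • multipartiteAdj ι κ R).charpoly =
      (X ^ (Fintype.card ι * Fintype.card κ - Fintype.card ι) *
        ((X - C (Fintype.card κ * t * (Fintype.card ι - 1))) *
          (X + C (Fintype.card κ * t)) ^ (Fintype.card ι - 1))).comp (X - C c) := by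
  have h : scalar _ c + t • multipartiteAdj ι κ R = t • multipartiteAdj ι κ R - scalar _ (-c) := by
    rw [map_neg, sub_neg_eq_add, add_comm]
  rw [h, charpoly_sub_scalar, multipartiteAdj,
    ← smul_kronecker, charpoly_kronecker_ones, smul_smul, charpoly_smul_ones_sub_one, C_neg,
    ← sub_eq_add_neg]

end

theorem intLap_eq_fromBlocks_of_symm {E A : V → V → ℕ} (hE : ∀ u v, E u v = 0)
    (hA : ∀ u v, A u v = A v u) {c : ℝ} (hOut : ∀ v, (dOut A v : ℝ) = c) :
    intLap E A = fromBlocks (scalar V c) (-Bm A) (-Bm A) (scalar V c) := by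
  have hIn : ∀ v, (dIn A v : ℝ) = c := fun v => by
    rw [← hOut v, dIn, dOut, Finset.sum_congr rfl fun u _ => hA u v]
  have hAu : Au E = 0 := by
    ext u v
    simp [Au, hE]
  have hBt : (Bm A)ᵀ = Bm A := by
    ext u v
    simp [Bm, hA u v]
  have hDeg : intDeg E A = fromBlocks (scalar V c) 0 0 (scalar V c) := by
    have hdU : ∀ v, dU E v = 0 := by simp [dU, hE]
    simp only [intDeg, hdU, zero_add, hOut, hIn, scalar_apply, fromBlocks_diagonal]
  rw [intLap, hDeg, intAdj, hAu, hBt, sub_eq_add_neg, fromBlocks_neg, fromBlocks_add]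
  simp

theorem charpoly_intLap_of_symm {E A : V → V → ℕ} (hE : ∀ u v, E u v = 0)
    (hA : ∀ u v, A u v = A v u) {c : ℝ} (hOut : ∀ v, (dOut A v : ℝ) = c) :
    (intLap E A).charpoly =
      (scalar V c + (-1 : ℝ) • Bm A).charpoly * (scalar V c + (1 : ℝ) • Bm A).charpoly := by
  rw [intLap_eq_fromBlocks_of_symm hE hA hOut, charpoly_fromBlocks_self, neg_one_smul,
    one_smul, sub_neg_eq_add]

/-- the characteristic polynomial of `𝓘ᴸ(K^D_{k(m)})` is
`(x − (2mk−2m)) · x · (x − mk)^(k−1) · (x − (mk−2m))^(k−1) · (x − (mk−m))^(2km−2k)`. -/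
theorem stmt6 (k m : ℕ) (hk : 1 ≤ k) (hm : 1 ≤ m)
    (E A : Fin k × Fin m → Fin k × Fin m → ℕ)
    (hEdef : ∀ p q, E p q = 0)
    (hAdef : ∀ p q, A p q = if p.1 = q.1 then 0 else 1) :
    (intLap E A).charpoly =
      (Polynomial.X - Polynomial.C (2 * (m : ℝ) * k - 2 * m)) * Polynomial.X *
        (Polynomial.X - Polynomial.C ((m : ℝ) * k)) ^ (k - 1) *
        (Polynomial.X - Polynomial.C ((m : ℝ) * k - 2 * m)) ^ (k - 1) *
        (Polynomial.X - Polynomial.C ((m : ℝ) * k - m)) ^ (2 * k * m - 2 * k) := by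
  have : NeZero k := ⟨by omega⟩
  have : NeZero m := ⟨by omega⟩
  have hB : Bm A = multipartiteAdj (Fin k) (Fin m) ℝ := by
    ext p q
    simp [Bm, hAdef, multipartiteAdj_apply, apply_ite]
  have hA : ∀ p q, A p q = A q p := by simp [hAdef, eq_comm]
  have hOut : ∀ p, (dOut A p : ℝ) = m * k - m := fun p => by
    have := sum_multipartiteAdj_apply (R := ℝ) p
    simp only [← hB, Bm, of_apply, Fintype.card_fin] at this
    push_cast [dOut, this]
    ring
  have hexp : 2 * k * m - 2 * k = (k * m - k) + (k * m - k) := by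
    have : k ≤ k * m := Nat.le_mul_of_pos_right k hm
    rw [mul_assoc]
    omega
  rw [charpoly_intLap_of_symm hEdef hA hOut, hB, charpoly_scalar_add_smul_multipartiteAdj,
    charpoly_scalar_add_smul_multipartiteAdj, hexp]
  simp only [Fintype.card_fin, mul_comp, pow_comp, X_comp, C_comp, sub_comp, add_comp]
  simp only [C_sub, C_mul, C_neg, C_1, map_natCast, C_ofNat]
  ring
end

section
/- Let G be a simple mixed graph on n vertices and let d₁ ≥ d₂ ≥ … ≥ d₂ₙ be the non-increasing rearrangement of the 2n numbers consisting of d v + d⁺ v and d v + d⁻ v for all vertices v (with multiplicity). Then for every k = 1, …, 2n one has Σ_{i=1}^{k} ν_i(G) ≥ Σ_{i=1}^{k} d_i, with equality when k = 2n. -/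
set_option linter.unusedSectionVars false

open Matrix Finset Polynomial

variable {V : Type*} [Fintype V] [DecidableEq V]

/-- the `2n` integrated degrees of the mixed graph, as a tuple indexed by `Fin (n+n)` -/
noncomputable def degT {n : ℕ} (E A : Fin n → Fin n → ℕ) : Fin (n + n) → ℝ :=
  fun i => Sum.elim (fun v => ((dU E v + dOut A v : ℕ) : ℝ))
    (fun v => ((dU E v + dIn A v : ℕ) : ℝ)) (finSumFinEquiv.symm i)

/-
Schur's inequality. Write a Hermitian matrix as `M = U diag(λ) U*`. The numbers `‖U i j‖²` form a
doubly stochastic matrix and `M i i = ∑ j, ‖U i j‖² λ j`, so the sum of any `k` diagonal entries is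
a combination of eigenvalues with weights in `[0, 1]` summing to `k`, which is at most the sum of
the `k` largest eigenvalues; the full sums agree since both are the trace. For a loopless mixed
graph the diagonal of `𝓘ᴸ(G)` is exactly the list of integrated degrees.
-/

lemma sortDesc_antitone {N : ℕ} (f : Fin N → ℝ) : Antitone (sortDesc f) :=
  fun _ _ hij => Tuple.monotone_sort f (Fin.rev_le_rev.mpr hij)

lemma sum_sortDesc {N : ℕ} (f : Fin N → ℝ) : ∑ i, sortDesc f i = ∑ i, f i :=
  Equiv.sum_comp (Fin.revPerm.trans (Tuple.sort f)) f

lemma exists_sum_eq_sum_sortDesc_lt {N : ℕ} (f : Fin N → ℝ) (k : ℕ) :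
    ∃ S : Finset (Fin N), #S = min N k ∧
      ∑ j ∈ S, f j = ∑ i ∈ univ.filter (fun i : Fin N => (i : ℕ) < k), sortDesc f i :=
  ⟨(univ.filter fun i : Fin N => (i : ℕ) < k).map (Fin.revPerm.trans (Tuple.sort f)).toEmbedding,
    by rw [card_map, Fin.card_filter_val_lt], sum_map _ _ _⟩

lemma sum_mul_le_sum_lt_of_antitone {N : ℕ} {μ : Fin N → ℝ} (hμ : Antitone μ) {c : Fin N → ℝ}
    (hc0 : ∀ i, 0 ≤ c i) (hc1 : ∀ i, c i ≤ 1) {k : ℕ} (hsum : ∑ i, c i = k) :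
    ∑ i, c i * μ i ≤ ∑ i ∈ univ.filter (fun i : Fin N => (i : ℕ) < k), μ i := by
  rcases k.eq_zero_or_pos with rfl | hk
  · have hc : c = 0 := (Fintype.sum_eq_zero_iff_of_nonneg hc0).mp (by simpa using hsum)
    simp [hc]
  have hkN : k ≤ N := by
    have : ∑ i, c i ≤ N := by simpa using sum_le_sum (s := univ) fun i _ => hc1 i
    exact_mod_cast hsum ▸ this
  set ind : Fin N → ℝ := fun i => if (i : ℕ) < k then 1 else 0
  set t := μ ⟨k - 1, by omega⟩
  -- `t` separates the first `k` values of `μ` from the rest, where `ind - c` changes sign.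
  have hterm : ∀ i, 0 ≤ (ind i - c i) * (μ i - t) := by
    intro i
    by_cases hi : (i : ℕ) < k
    · exact mul_nonneg (by simp [ind, hi, hc1 i])
        (sub_nonneg.mpr (hμ (Fin.mk_le_mk.mpr (by omega))))
    · exact mul_nonneg_of_nonpos_of_nonpos (by simp [ind, hi, hc0 i])
        (sub_nonpos.mpr (hμ (Fin.mk_le_mk.mpr (by omega))))
  have hind : ∑ i, ind i = k := by
    simp [ind, sum_boole, Fin.card_filter_val_lt, hkN]
  have hindμ : ∑ i, ind i * μ i = ∑ i ∈ univ.filter (fun i : Fin N => (i : ℕ) < k), μ i := by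
    simp [ind, ite_mul, sum_ite]
  have hnonneg := sum_nonneg fun i (_ : i ∈ univ) => hterm i
  simp only [sub_mul, mul_sub, sum_sub_distrib, ← sum_mul, hind, hsum, hindμ] at hnonneg
  linarith

lemma sum_mul_le_sum_sortDesc_lt {ι : Type*} [Fintype ι] {N : ℕ} (e : Fin N ≃ ι) (f : ι → ℝ)
    {c : ι → ℝ} (hc0 : ∀ j, 0 ≤ c j) (hc1 : ∀ j, c j ≤ 1) {k : ℕ} (hsum : ∑ j, c j = k) :
    ∑ j, c j * f j ≤ ∑ i ∈ univ.filter (fun i : Fin N => (i : ℕ) < k), sortDesc (f ∘ e) i := by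
  set σ := (Fin.revPerm.trans (Tuple.sort (f ∘ e))).trans e
  have hσ : ∀ i, f (σ i) = sortDesc (f ∘ e) i := fun _ => rfl
  rw [← σ.sum_comp] at hsum ⊢
  simp only [hσ]
  exact sum_mul_le_sum_lt_of_antitone (sortDesc_antitone _) (fun i => hc0 (σ i))
    (fun i => hc1 (σ i)) hsum

namespace Matrix

variable {𝕜 ι : Type*} [RCLike 𝕜] [Fintype ι] [DecidableEq ι]

lemma sum_norm_sq_row_eq_one_of_mem_unitaryGroup {U : Matrix ι ι 𝕜}
    (hU : U ∈ unitaryGroup ι 𝕜) (i : ι) : ∑ j, ‖U i j‖ ^ 2 = 1 := by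
  have h := congr_fun₂ (mem_unitaryGroup_iff.mp hU) i i
  simp only [mul_apply, star_apply, RCLike.star_def, RCLike.mul_conj, one_apply_eq] at h
  exact_mod_cast h

lemma sum_norm_sq_col_eq_one_of_mem_unitaryGroup {U : Matrix ι ι 𝕜}
    (hU : U ∈ unitaryGroup ι 𝕜) (j : ι) : ∑ i, ‖U i j‖ ^ 2 = 1 := by
  simpa [star_apply] using
    sum_norm_sq_row_eq_one_of_mem_unitaryGroup (Unitary.star_mem hU) j

namespace IsHermitian

lemma re_apply_self_eq_sum {M : Matrix ι ι 𝕜} (hM : M.IsHermitian) (i : ι) :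
    RCLike.re (M i i) =
      ∑ j, hM.eigenvalues j * ‖(hM.eigenvectorUnitary : Matrix ι ι 𝕜) i j‖ ^ 2 := by
  conv_lhs => rw [hM.spectral_theorem, Unitary.conjStarAlgAut_apply]
  rw [mul_apply, map_sum]
  refine sum_congr rfl fun j _ => ?_
  rw [mul_diagonal, star_apply, RCLike.star_def, mul_right_comm, RCLike.mul_conj,
    Function.comp_apply, ← RCLike.ofReal_pow, ← RCLike.ofReal_mul, RCLike.ofReal_re, mul_comm]

lemma sum_re_apply_self_le_sum_sortDesc {N : ℕ} {M : Matrix ι ι 𝕜} (hM : M.IsHermitian)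
    (e : Fin N ≃ ι) (S : Finset ι) :
    ∑ i ∈ S, RCLike.re (M i i) ≤
      ∑ k ∈ univ.filter (fun k : Fin N => (k : ℕ) < #S), sortDesc (hM.eigenvalues ∘ e) k := by
  set U := hM.eigenvectorUnitary
  set c : ι → ℝ := fun j => ∑ i ∈ S, ‖(U : Matrix ι ι 𝕜) i j‖ ^ 2
  have hc1 : ∀ j, c j ≤ 1 := fun j =>
    (sum_le_sum_of_subset_of_nonneg (subset_univ S) fun _ _ _ => by positivity).trans_eq
      (sum_norm_sq_col_eq_one_of_mem_unitaryGroup U.2 j)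
  have hsum : ∑ j, c j = #S := by
    rw [sum_comm, sum_congr rfl fun i _ => sum_norm_sq_row_eq_one_of_mem_unitaryGroup U.2 i]
    simp
  have hdiag : ∑ i ∈ S, RCLike.re (M i i) = ∑ j, c j * hM.eigenvalues j := by
    simp only [re_apply_self_eq_sum hM, c, sum_mul]
    rw [sum_comm]
    exact sum_congr rfl fun _ _ => sum_congr rfl fun _ _ => mul_comm _ _
  rw [hdiag]
  exact sum_mul_le_sum_sortDesc_lt e _ (fun _ => by positivity) hc1 hsum

lemma sum_sortDesc_eigenvalues {N : ℕ} {M : Matrix ι ι 𝕜} (hM : M.IsHermitian) (e : Fin N ≃ ι) :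
    ∑ k, sortDesc (hM.eigenvalues ∘ e) k = RCLike.re M.trace := by
  rw [sum_sortDesc, hM.trace_eq_sum_eigenvalues, map_sum]
  simp only [RCLike.ofReal_re]
  exact e.sum_comp hM.eigenvalues

end IsHermitian

end Matrix

lemma intLap_apply_self {V : Type*} [Fintype V] [DecidableEq V] {E : V → V → ℕ}
    (hE : ∀ v, E v v = 0) (A : V → V → ℕ) (x : V ⊕ V) :
    intLap E A x x = Sum.elim (fun v => ((dU E v + dOut A v : ℕ) : ℝ))
      (fun v => ((dU E v + dIn A v : ℕ) : ℝ)) x := by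
  cases x <;> simp [intLap, intDeg, intAdj, Au, hE]

/-- with `d₁ ≥ … ≥ d₂ₙ` the non-increasing rearrangement of the integrated
degrees, `Σ_{i=1}^{k} ν_i(G) ≥ Σ_{i=1}^{k} d_i` for `k = 1,…,2n`, with equality at `k = 2n`. -/
theorem stmt8 (n : ℕ) (E A : Fin n → Fin n → ℕ) (hE : ∀ u v, E u v = E v u)
    (hS : IsSimple E A) :
    (∀ k : ℕ, 1 ≤ k → k ≤ n + n →
      ∑ i ∈ Finset.univ.filter (fun i : Fin (n + n) => (i : ℕ) < k), sortDesc (degT E A) i ≤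
        ∑ i ∈ Finset.univ.filter (fun i : Fin (n + n) => (i : ℕ) < k), nuT E A hE i) ∧
    ∑ i, nuT E A hE i = ∑ i, sortDesc (degT E A) i := by
  obtain ⟨-, -, hloopless, -⟩ := hS
  set e : Fin (n + n) ≃ Fin n ⊕ Fin n := finSumFinEquiv.symm
  have hL := intLap_isHermitian E A hE
  have hdeg : ∀ i, degT E A i = intLap E A (e i) (e i) := fun i =>
    (intLap_apply_self hloopless A (e i)).symm
  have hnu : nuT E A hE = sortDesc (hL.eigenvalues ∘ e) := rfl
  refine ⟨fun k _ hk => ?_, ?_⟩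
  · obtain ⟨S, hcard, hsum⟩ := exists_sum_eq_sum_sortDesc_lt (degT E A) k
    have hschur := hL.sum_re_apply_self_le_sum_sortDesc e (S.map e.toEmbedding)
    rw [card_map, hcard, min_eq_right hk, sum_map] at hschur
    simpa [← hsum, hdeg, hnu] using hschur
  · rw [sum_sortDesc, hnu, hL.sum_sortDesc_eigenvalues e, RCLike.re_to_real, trace,
      ← e.sum_comp]
    exact sum_congr rfl fun i _ => (hdeg i).symm
end

section
/- For every simple mixed graph G on n ≥ 1 vertices, ν₁(G) ≤ 2·μ₁ + max_v (d⁺ v) + max_v (d⁻ v), where μ₁ is the largest eigenvalue of the Laplacian matrix L(Gᵤ) = diag(d) − Aᵤ of the undirected part of G. -/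
set_option linter.unusedSectionVars false

open Matrix Finset Polynomial

variable {V : Type*} [Fintype V] [DecidableEq V]

/-- Laplacian matrix of the undirected part `Gᵤ`. -/
def lapU (E : V → V → ℕ) : Matrix V V ℝ :=
  Matrix.diagonal (fun v => ((dU E v : ℕ) : ℝ)) - Au E

lemma lapU_isHermitian (E : V → V → ℕ) (hE : ∀ u v, E u v = E v u) :
    (lapU E).IsHermitian := by
  refine (Matrix.isHermitian_diagonal _).sub ?_
  show (Au E)ᴴ = Au E
  rw [Matrix.conjTranspose_eq_transpose_of_trivial]
  ext u v
  by_cases h : u = v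
  · subst h; rfl
  · simp [Au, Matrix.transpose_apply, h, Ne.symm h, hE u v]

/-! `𝓘ᴸ(G)` is the block-diagonal `L(Gᵤ) ⊕ L(Gᵤ)` plus the Laplacian of the bipartite graph with
biadjacency matrix `B`. On `x = (y, z)` the first part contributes at most `μ₁ ‖x‖²`. For the
second, weighted Cauchy–Schwarz bounds the cross term by `2 |yᵀ B z| ≤ Δ⁻ ‖y‖² + Δ⁺ ‖z‖²`, and the
diagonal part is at most `Δ⁺ ‖y‖² + Δ⁻ ‖z‖²`. Hence `ν₁ ≤ μ₁ + Δ⁺ + Δ⁻`, which is at most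
`2 μ₁ + Δ⁺ + Δ⁻` because `L(Gᵤ)` is positive semidefinite. -/

namespace Matrix

variable {m k : Type*} [Fintype m] [Fintype k]

theorem sq_dotProduct_mulVec_le {B : Matrix m k ℝ} (hB : ∀ i j, 0 ≤ B i j) (y : m → ℝ)
    (z : k → ℝ) : (y ⬝ᵥ (B *ᵥ z)) ^ 2 ≤
      (∑ i, (∑ j, B i j) * y i ^ 2) * ∑ j, (∑ i, B i j) * z j ^ 2 := by
  have hyz : y ⬝ᵥ (B *ᵥ z) = ∑ p : m × k, B p.1 p.2 * y p.1 * z p.2 := by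
    simp only [Fintype.sum_prod_type, dotProduct, mulVec, Finset.mul_sum]
    exact Finset.sum_congr rfl fun i _ => Finset.sum_congr rfl fun j _ => by ring
  have hy : ∑ i, (∑ j, B i j) * y i ^ 2 = ∑ p : m × k, B p.1 p.2 * y p.1 ^ 2 := by
    simp only [Fintype.sum_prod_type, Finset.sum_mul]
  have hz : ∑ j, (∑ i, B i j) * z j ^ 2 = ∑ p : m × k, B p.1 p.2 * z p.2 ^ 2 := by
    simp only [Fintype.sum_prod_type_right, Finset.sum_mul]
  rw [hyz, hy, hz]
  exact Finset.sum_sq_le_sum_mul_sum_of_sq_le_mul _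
    (fun p _ => mul_nonneg (hB _ _) (sq_nonneg _)) (fun p _ => mul_nonneg (hB _ _) (sq_nonneg _))
    fun p _ => le_of_eq (by ring)

theorem sumElim_dotProduct_fromBlocks_mulVec_sumElim (P : Matrix m m ℝ) (Q : Matrix m k ℝ)
    (R : Matrix k m ℝ) (S : Matrix k k ℝ) (y : m → ℝ) (z : k → ℝ) :
    Sum.elim y z ⬝ᵥ (fromBlocks P Q R S *ᵥ Sum.elim y z) =
      y ⬝ᵥ (P *ᵥ y) + y ⬝ᵥ (Q *ᵥ z) + (z ⬝ᵥ (R *ᵥ y) + z ⬝ᵥ (S *ᵥ z)) := by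
  rw [fromBlocks_mulVec, sumElim_dotProduct_sumElim, dotProduct_add, dotProduct_add,
    Sum.elim_comp_inl, Sum.elim_comp_inr]

variable [DecidableEq m] [DecidableEq k]

namespace IsHermitian

variable {M : Matrix m m ℝ} {c : ℝ}

theorem eigenvalues_le_of_forall_dotProduct_mulVec_le (hM : M.IsHermitian)
    (h : ∀ x : m → ℝ, x ⬝ᵥ (M *ᵥ x) ≤ c * (x ⬝ᵥ x)) (i : m) : hM.eigenvalues i ≤ c := by
  set v := hM.eigenvectorBasis i
  have hv : (v : m → ℝ) ⬝ᵥ v = 1 := by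
    have := real_inner_self_eq_norm_sq v
    rwa [hM.eigenvectorBasis.orthonormal.norm_eq_one, EuclideanSpace.inner_eq_star_dotProduct,
      star_trivial, one_pow] at this
  simpa [hM.eigenvalues_eq i, hv] using h v

open Unitary in
theorem dotProduct_mulVec_le_of_forall_eigenvalues_le (hM : M.IsHermitian)
    (h : ∀ i, hM.eigenvalues i ≤ c) (x : m → ℝ) : x ⬝ᵥ (M *ᵥ x) ≤ c * (x ⬝ᵥ x) := by
  have hpsd : (c • 1 - M).PosSemidef := by
    have hdiag : c • 1 - M = conjStarAlgAut ℝ _ hM.eigenvectorUnitary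
        (diagonal fun i => c - hM.eigenvalues i) := by
      conv_lhs => rw [hM.spectral_theorem]
      rw [← map_one (conjStarAlgAut ℝ _ hM.eigenvectorUnitary), ← map_smul, ← map_sub]
      congr 1
      ext i j
      by_cases hij : i = j <;> simp [hij]
    rw [hdiag, conjStarAlgAut_apply, isUnit_coe.posSemidef_star_right_conjugate_iff,
      posSemidef_diagonal_iff]
    exact fun i => sub_nonneg.2 (h i)
  simpa [sub_mulVec, smul_mulVec, dotProduct_sub, sub_nonneg] using
    hpsd.dotProduct_mulVec_nonneg x

end IsHermitian

theorem dotProduct_diagonal_mulVec_self (d x : m → ℝ) :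
    x ⬝ᵥ (diagonal d *ᵥ x) = ∑ i, d i * x i ^ 2 := by
  simp only [dotProduct, mulVec_diagonal]
  exact Finset.sum_congr rfl fun i _ => by ring

theorem dotProduct_diagonal_mulVec_le {d : m → ℝ} {a : ℝ} (h : ∀ i, d i ≤ a) (x : m → ℝ) :
    x ⬝ᵥ (diagonal d *ᵥ x) ≤ a * (x ⬝ᵥ x) := by
  rw [dotProduct_diagonal_mulVec_self, dotProduct, Finset.mul_sum]
  refine Finset.sum_le_sum fun i _ => ?_
  rw [← sq]
  exact mul_le_mul_of_nonneg_right (h i) (sq_nonneg _)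

theorem posSemidef_diagonal_sum_sub {W : Matrix m m ℝ} (hW : W.IsSymm) (hW₀ : ∀ i j, 0 ≤ W i j) :
    (diagonal (fun i => ∑ j, W i j) - W).PosSemidef := by
  refine .of_dotProduct_mulVec_nonneg
    ((isHermitian_diagonal _).sub (isHermitian_iff_isSymm.2 hW)) fun x => ?_
  set q := x ⬝ᵥ ((diagonal (fun i => ∑ j, W i j) - W) *ᵥ x)
  have hq : q = ∑ i, ∑ j, W i j * (x i ^ 2 - x i * x j) := by
    simp only [q]
    rw [sub_mulVec, dotProduct_sub, dotProduct_diagonal_mulVec_self]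
    simp only [dotProduct, mulVec, Finset.sum_mul, Finset.mul_sum, ← Finset.sum_sub_distrib]
    refine Finset.sum_congr rfl fun i _ => Finset.sum_congr rfl fun j _ => by ring
  have hq' : q = ∑ i, ∑ j, W i j * (x j ^ 2 - x i * x j) := by
    rw [hq, Finset.sum_comm]
    refine Finset.sum_congr rfl fun i _ => Finset.sum_congr rfl fun j _ => ?_
    rw [hW.apply]
    ring
  have hsq : q + q = ∑ i, ∑ j, W i j * (x i - x j) ^ 2 := by
    nth_rewrite 1 [hq]
    rw [hq', ← Finset.sum_add_distrib]
    refine Finset.sum_congr rfl fun i _ => ?_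
    rw [← Finset.sum_add_distrib]
    exact Finset.sum_congr rfl fun j _ => by ring
  have : 0 ≤ ∑ i, ∑ j, W i j * (x i - x j) ^ 2 :=
    Finset.sum_nonneg fun i _ => Finset.sum_nonneg fun j _ => mul_nonneg (hW₀ i j) (sq_nonneg _)
  simp only [star_trivial]
  linarith

def bipartiteLaplacian (B : Matrix m k ℝ) : Matrix (m ⊕ k) (m ⊕ k) ℝ :=
  fromBlocks (diagonal fun i => ∑ j, B i j) (-B) (-Bᵀ) (diagonal fun j => ∑ i, B i j)

theorem dotProduct_bipartiteLaplacian_mulVec_le {B : Matrix m k ℝ} (hB : ∀ i j, 0 ≤ B i j)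
    {a b : ℝ} (ha₀ : 0 ≤ a) (hb₀ : 0 ≤ b) (ha : ∀ i, ∑ j, B i j ≤ a) (hb : ∀ j, ∑ i, B i j ≤ b)
    (x : m ⊕ k → ℝ) : x ⬝ᵥ (bipartiteLaplacian B *ᵥ x) ≤ (a + b) * (x ⬝ᵥ x) := by
  obtain ⟨y, z, rfl⟩ : ∃ y z, x = Sum.elim y z :=
    ⟨x ∘ Sum.inl, x ∘ Sum.inr, (Sum.elim_comp_inl_inr x).symm⟩
  have hBt : z ⬝ᵥ (-Bᵀ *ᵥ y) = -(y ⬝ᵥ (B *ᵥ z)) := by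
    rw [neg_mulVec, dotProduct_neg, mulVec_transpose, dotProduct_comm, dotProduct_mulVec]
  rw [bipartiteLaplacian, sumElim_dotProduct_fromBlocks_mulVec_sumElim, sumElim_dotProduct_sumElim,
    hBt, neg_mulVec, dotProduct_neg]
  have hy := dotProduct_diagonal_mulVec_le ha y
  have hz := dotProduct_diagonal_mulVec_le hb z
  have hyz := sq_dotProduct_mulVec_le hB y z
  simp only [dotProduct_diagonal_mulVec_self] at hy hz ⊢
  set P := y ⬝ᵥ (B *ᵥ z)
  set R := ∑ i, (∑ j, B i j) * y i ^ 2
  set C := ∑ j, (∑ i, B i j) * z j ^ 2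
  have hC : 0 ≤ C := Finset.sum_nonneg fun j _ =>
    mul_nonneg (Finset.sum_nonneg fun i _ => hB i j) (sq_nonneg _)
  have hY : 0 ≤ y ⬝ᵥ y := dotProduct_self_star_nonneg y
  have hZ : 0 ≤ z ⬝ᵥ z := dotProduct_self_star_nonneg z
  -- weighted Cauchy–Schwarz and AM–GM: `(2P)² ≤ 4 (a ‖y‖²) (b ‖z‖²) ≤ (b ‖y‖² + a ‖z‖²)²`
  have hP : -(b * (y ⬝ᵥ y) + a * (z ⬝ᵥ z)) ≤ 2 * P := by
    refine (abs_le_of_sq_le_sq' ?_ (add_nonneg (mul_nonneg hb₀ hY) (mul_nonneg ha₀ hZ))).1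
    nlinarith [mul_le_mul hy hz hC (mul_nonneg ha₀ hY), sq_nonneg (b * (y ⬝ᵥ y) - a * (z ⬝ᵥ z))]
  linarith

end Matrix

theorem le_sortDesc_zero {N : ℕ} (hN : 0 < N) (f : Fin N → ℝ) (i : Fin N) :
    f i ≤ sortDesc f ⟨0, hN⟩ := by
  have hi : f i = (f ∘ Tuple.sort f) ((Tuple.sort f)⁻¹ i) := by simp
  rw [hi, sortDesc]
  refine Tuple.monotone_sort f ?_
  rw [Fin.le_def]
  simp only [Equiv.Perm.coe_inv, Fin.rev, zero_add]
  omega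

theorem lapU_eq (E : V → V → ℕ) :
    lapU E = diagonal (fun u => ∑ v, (E u v : ℝ)) - Matrix.of fun u v => (E u v : ℝ) := by
  ext u v
  by_cases huv : u = v
  · subst huv
    simp only [lapU, Au, dU, Matrix.sub_apply, diagonal_apply_eq, of_apply, if_true]
    push_cast
    rw [Finset.filter_ne', Finset.sum_erase_eq_sub (Finset.mem_univ u)]
    ring
  · simp [lapU, Au, huv]

theorem lapU_posSemidef (E : V → V → ℕ) (hE : ∀ u v, E u v = E v u) : (lapU E).PosSemidef := by
  rw [lapU_eq]
  exact posSemidef_diagonal_sum_sub (IsSymm.ext fun u v => by simp [hE u v]) fun _ _ =>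
    Nat.cast_nonneg _

theorem intLap_eq (E A : V → V → ℕ) :
    intLap E A = fromBlocks (lapU E) 0 0 (lapU E) + bipartiteLaplacian (Bm A) := by
  ext (u | u) (v | v) <;>
    simp [intLap, intDeg, intAdj, lapU, bipartiteLaplacian, Bm, dOut, dIn, diagonal_apply] <;>
    by_cases huv : u = v <;> simp [huv] <;> ring

theorem dotProduct_bipartiteLaplacian_Bm_mulVec_le (A : V → V → ℕ) (x : V ⊕ V → ℝ) :
    x ⬝ᵥ (bipartiteLaplacian (Bm A) *ᵥ x) ≤
      (((univ.sup (dOut A) : ℕ) : ℝ) + ((univ.sup (dIn A) : ℕ) : ℝ)) * (x ⬝ᵥ x) :=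
  dotProduct_bipartiteLaplacian_mulVec_le (fun _ _ => Nat.cast_nonneg _) (Nat.cast_nonneg _)
    (Nat.cast_nonneg _)
    (fun u => by exact_mod_cast le_sup (f := dOut A) (mem_univ u))
    (fun v => by exact_mod_cast le_sup (f := dIn A) (mem_univ v)) x

/-- `ν₁(G) ≤ 2·μ₁ + max_v d⁺(v) + max_v d⁻(v)`, where `μ₁` is the largest
eigenvalue of the Laplacian `L(Gᵤ)` of the undirected part. -/
theorem stmt9 (n : ℕ) (hn : 0 < n) (E A : Fin n → Fin n → ℕ)
    (hE : ∀ u v, E u v = E v u) :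
    nuT E A hE ⟨0, by omega⟩ ≤
      2 * sortDesc (fun i : Fin n => (lapU_isHermitian E hE).eigenvalues i) ⟨0, hn⟩ +
        ((Finset.univ.sup (dOut A) : ℕ) : ℝ) + ((Finset.univ.sup (dIn A) : ℕ) : ℝ) := by
  set μ := sortDesc (fun i : Fin n => (lapU_isHermitian E hE).eigenvalues i) ⟨0, hn⟩
  have hμ : ∀ i, (lapU_isHermitian E hE).eigenvalues i ≤ μ := le_sortDesc_zero hn _
  have hμ₀ : 0 ≤ μ := ((lapU_posSemidef E hE).eigenvalues_nonneg ⟨0, hn⟩).trans (hμ _)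
  have hL := (lapU_isHermitian E hE).dotProduct_mulVec_le_of_forall_eigenvalues_le hμ
  obtain ⟨j, hj⟩ : ∃ j, nuT E A hE ⟨0, by omega⟩ = (intLap_isHermitian E A hE).eigenvalues j :=
    ⟨_, rfl⟩
  rw [hj]
  refine (intLap_isHermitian E A hE).eigenvalues_le_of_forall_dotProduct_mulVec_le (fun x => ?_) j
  obtain ⟨y, z, rfl⟩ : ∃ y z, x = Sum.elim y z :=
    ⟨x ∘ Sum.inl, x ∘ Sum.inr, (Sum.elim_comp_inl_inr x).symm⟩
  have hArcs := dotProduct_bipartiteLaplacian_Bm_mulVec_le A (Sum.elim y z)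
  rw [intLap_eq, add_mulVec, dotProduct_add, sumElim_dotProduct_fromBlocks_mulVec_sumElim,
    zero_mulVec, zero_mulVec, dotProduct_zero, dotProduct_zero]
  rw [sumElim_dotProduct_sumElim] at hArcs ⊢
  have hy : 0 ≤ y ⬝ᵥ y := dotProduct_self_star_nonneg y
  have hz : 0 ≤ z ⬝ᵥ z := dotProduct_self_star_nonneg z
  nlinarith [hL y, hL z, mul_nonneg hμ₀ (add_nonneg hy hz)]
end

section
/- Let G be a simple mixed graph on n vertices and let u, v be distinct vertices. (i) If E u v = 0 (no edge joins u and v), then ν_{2n−1}(G) ≤ (1/2)·(d u + d v + d⁺ u + d⁺ v) and ν_{2n−1}(G) ≤ (1/2)·(d u + d v + d⁻ u + d⁻ v). (ii) If A u v = 0 (there is no arc from u to v), then ν_{2n−1}(G) ≤ (1/2)·(d u + d v + d⁺ u + d⁻ v). -/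
set_option linter.unusedSectionVars false

open Matrix Finset Polynomial

variable {V : Type*} [Fintype V] [DecidableEq V]

/-! The integrated Laplacian has zero row sums, so the all-ones vector is an eigenvector for `0`,
and its diagonal entries are nonnegative. If `𝓘ᴸ a b = 0` for distinct indices `a, b`, then
`e_a - e_b` is orthogonal to the all-ones vector and has Rayleigh quotient
`c = (𝓘ᴸ a a + 𝓘ᴸ b b) / 2 ≥ 0`. An eigenvector and an orthogonal vector, both with Rayleigh
quotient at most `c`, force two eigenvalues at most `c`, so the second smallest eigenvalue
`ν_{2n-1}` is at most `c`. The three bounds take `u, v` both in the first copy of `V`, both in the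
second, and `u` in the first with `v` in the second; for a loopless graph the diagonal entries
are `d + d⁺` and `d + d⁻`. -/

namespace Matrix

variable {ι : Type*} [Fintype ι] [DecidableEq ι]

lemma exists_ne_le_of_diagonal {lam X Y : ι → ℝ} {μ c : ℝ}
    (hX : X ≠ 0) (hY : Y ≠ 0) (hXY : X ⬝ᵥ Y = 0) (hXeig : diagonal lam *ᵥ X = μ • X)
    (hμc : μ ≤ c) (hq : Y ⬝ᵥ (diagonal lam *ᵥ Y) ≤ c * (Y ⬝ᵥ Y)) :
    ∃ i j, i ≠ j ∧ lam i ≤ c ∧ lam j ≤ c := by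
  -- Otherwise `X` is supported on the single index `i₀` with `lam i₀ ≤ c`, where `Y` must vanish.
  by_contra! H
  have hXeig' (i : ι) : lam i * X i = μ * X i := by
    simpa [mulVec_diagonal] using congrFun hXeig i
  obtain ⟨i₀, hXi₀⟩ := Function.ne_iff.mp hX
  have hlam_i₀ : lam i₀ = μ := mul_right_cancel₀ hXi₀ (hXeig' i₀)
  have hlt (j : ι) (hj : j ≠ i₀) : c < lam j := H i₀ j hj.symm (hlam_i₀.le.trans hμc)
  have hX_eq (j : ι) (hj : j ≠ i₀) : X j = 0 :=
    (mul_eq_mul_right_iff.mp (hXeig' j)).resolve_left (by linarith [hlt j hj])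
  have hYi₀ : Y i₀ = 0 := by
    rw [dotProduct, Fintype.sum_eq_single i₀ fun j hj => by rw [hX_eq j hj, zero_mul]] at hXY
    exact (mul_eq_zero.mp hXY).resolve_left hXi₀
  obtain ⟨i₁, hYi₁⟩ := Function.ne_iff.mp hY
  have hi₁ : i₁ ≠ i₀ := fun h => hYi₁ (h ▸ hYi₀)
  have hpos : 0 < ∑ i, (lam i - c) * (Y i * Y i) := by
    refine Finset.sum_pos' (fun i _ => ?_) ⟨i₁, Finset.mem_univ _, ?_⟩
    · rcases eq_or_ne i i₀ with rfl | hi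
      · simp [hYi₀]
      · exact mul_nonneg (by linarith [hlt i hi]) (mul_self_nonneg _)
    · exact mul_pos (by linarith [hlt i₁ hi₁]) (mul_self_pos.mpr hYi₁)
  have hsum : ∑ i, (lam i - c) * (Y i * Y i) = Y ⬝ᵥ (diagonal lam *ᵥ Y) - c * (Y ⬝ᵥ Y) := by
    simp only [dotProduct, mulVec_diagonal, Finset.mul_sum, ← Finset.sum_sub_distrib]
    exact Finset.sum_congr rfl fun i _ => by ring
  linarith

lemma unitaryGroup_star_mulVec_dotProduct (U : unitaryGroup ι ℝ) (z w : ι → ℝ) :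
    (star (U : Matrix ι ι ℝ) *ᵥ z) ⬝ᵥ (star (U : Matrix ι ι ℝ) *ᵥ w) = z ⬝ᵥ w := by
  rw [dotProduct_mulVec, star_eq_conjTranspose, conjTranspose_eq_transpose_of_trivial,
    mulVec_transpose, vecMul_vecMul, ← conjTranspose_eq_transpose_of_trivial,
    ← star_eq_conjTranspose, Unitary.mul_star_self_of_mem U.2, vecMul_one]

namespace IsHermitian

lemma star_eigenvectorUnitary_mulVec_mulVec {M : Matrix ι ι ℝ} (hM : M.IsHermitian)
    (w : ι → ℝ) :
    star (hM.eigenvectorUnitary : Matrix ι ι ℝ) *ᵥ (M *ᵥ w) =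
      diagonal hM.eigenvalues *ᵥ (star (hM.eigenvectorUnitary : Matrix ι ι ℝ) *ᵥ w) := by
  conv_lhs => arg 2; rw [hM.spectral_theorem, Unitary.conjStarAlgAut_apply]
  rw [mulVec_mulVec, ← mul_assoc, ← mul_assoc, Unitary.star_mul_self_of_mem hM.eigenvectorUnitary.2,
    one_mul, ← mulVec_mulVec, RCLike.ofReal_real_eq_id, Function.id_comp]

lemma exists_ne_eigenvalues_le {M : Matrix ι ι ℝ} (hM : M.IsHermitian) {x y : ι → ℝ} {μ c : ℝ}
    (hx : x ≠ 0) (hy : y ≠ 0) (hxy : x ⬝ᵥ y = 0) (hMx : M *ᵥ x = μ • x) (hμc : μ ≤ c)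
    (hq : y ⬝ᵥ (M *ᵥ y) ≤ c * (y ⬝ᵥ y)) :
    ∃ i j, i ≠ j ∧ hM.eigenvalues i ≤ c ∧ hM.eigenvalues j ≤ c := by
  set T := star (hM.eigenvectorUnitary : Matrix ι ι ℝ)
  have hdot := unitaryGroup_star_mulVec_dotProduct hM.eigenvectorUnitary
  have hdiag := hM.star_eigenvectorUnitary_mulVec_mulVec
  have hT (z : ι → ℝ) (hz : z ≠ 0) : T *ᵥ z ≠ 0 := fun h =>
    hz (dotProduct_self_eq_zero.mp (by rw [← hdot, h, zero_dotProduct]))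
  refine exists_ne_le_of_diagonal (hT x hx) (hT y hy) (by rwa [hdot]) ?_ hμc ?_
  · rw [← hdiag, hMx, mulVec_smul]
  · rwa [← hdiag, hdot, hdot]

end IsHermitian

end Matrix

lemma sortDesc_sub_two_le {N : ℕ} {f : Fin N → ℝ} {c : ℝ} {i j : Fin N} (hij : i ≠ j)
    (hi : f i ≤ c) (hj : f j ≤ c) (hN : N - 2 < N) : sortDesc f ⟨N - 2, hN⟩ ≤ c := by
  set σ := Tuple.sort f
  obtain ⟨m, hm, hfm⟩ : ∃ m : Fin N, 1 ≤ (m : ℕ) ∧ f (σ m) ≤ c := by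
    by_cases h : 1 ≤ (σ.symm i : ℕ)
    · exact ⟨σ.symm i, h, by simpa using hi⟩
    · refine ⟨σ.symm j, ?_, by simpa using hj⟩
      have := Fin.val_injective.ne (σ.symm.injective.ne hij)
      omega
  have hrev : (⟨N - 2, hN⟩ : Fin N).rev ≤ m := by
    rw [Fin.le_def, Fin.val_rev]
    dsimp only
    omega
  exact (Tuple.monotone_sort f hrev).trans hfm

section IntegratedLaplacian

variable (E A : V → V → ℕ)

lemma intLap_inl_inl_of_ne {v w : V} (h : v ≠ w) :
    intLap E A (.inl v) (.inl w) = -(E v w : ℝ) := by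
  simp [intLap, intDeg, intAdj, Au, h]

lemma intLap_inr_inr_of_ne {v w : V} (h : v ≠ w) :
    intLap E A (.inr v) (.inr w) = -(E v w : ℝ) := by
  simp [intLap, intDeg, intAdj, Au, h]

lemma intLap_inl_inr (v w : V) : intLap E A (.inl v) (.inr w) = -(A v w : ℝ) := by
  simp [intLap, intDeg, intAdj, Bm]

lemma intLap_inl_inl_self (v : V) :
    intLap E A (.inl v) (.inl v) = (dU E v + dOut A v : ℕ) - 2 * (E v v : ℝ) := by
  simp [intLap, intDeg, intAdj, Au]

lemma intLap_inr_inr_self (v : V) :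
    intLap E A (.inr v) (.inr v) = (dU E v + dIn A v : ℕ) - 2 * (E v v : ℝ) := by
  simp [intLap, intDeg, intAdj, Au]

lemma intLap_apply_self_nonneg (a : V ⊕ V) : 0 ≤ intLap E A a a := by
  cases a with
  | inl v => rw [intLap_inl_inl_self, dU]; push_cast; ring_nf; positivity
  | inr v => rw [intLap_inr_inr_self, dU]; push_cast; ring_nf; positivity

lemma Au_mulVec_one : Au E *ᵥ 1 = fun v => (dU E v : ℝ) := by
  ext v
  rw [mulVec, dotProduct, ← Finset.add_sum_erase _ _ (Finset.mem_univ v), dU, Finset.filter_ne',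
    add_comm]
  push_cast
  congr 1
  · exact Finset.sum_congr rfl fun w hw => by simp [Au, (Finset.ne_of_mem_erase hw).symm]
  · simp [Au]

lemma Bm_mulVec_one : Bm A *ᵥ 1 = fun v => (dOut A v : ℝ) := by
  ext v
  simp [mulVec, dotProduct, Bm, dOut]

lemma transpose_Bm_mulVec_one : (Bm A)ᵀ *ᵥ 1 = fun v => (dIn A v : ℝ) := by
  ext v
  simp [mulVec, dotProduct, Bm, dIn]

lemma intLap_mulVec_one : intLap E A *ᵥ 1 = 0 := by
  ext (v | v) <;>
    simp [intLap, intDeg, intAdj, sub_mulVec, fromBlocks_mulVec, Au_mulVec_one, Bm_mulVec_one,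
      transpose_Bm_mulVec_one, mulVec_diagonal, add_comm]

end IntegratedLaplacian

lemma nuT_sub_two_le_of_intLap_eq_zero {n : ℕ} (E A : Fin n → Fin n → ℕ)
    (hE : ∀ u v, E u v = E v u) {a b : Fin n ⊕ Fin n} (hab : a ≠ b) (hL : intLap E A a b = 0)
    (hn : n + n - 2 < n + n) :
    nuT E A hE ⟨n + n - 2, hn⟩ ≤ (intLap E A a a + intLap E A b b) / 2 := by
  have hM := intLap_isHermitian E A hE
  have hL' : intLap E A b a = 0 := by rw [← hM.apply b a, hL, star_zero]
  set y : Fin n ⊕ Fin n → ℝ := Pi.single a 1 - Pi.single b 1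
  have hy : y ≠ 0 := fun h => by simpa [y, Pi.single_eq_of_ne hab] using congrFun h a
  have hxy : 1 ⬝ᵥ y = 0 := by simp [y]
  have hyy : y ⬝ᵥ y = 2 := by
    norm_num [y, Pi.single_eq_of_ne hab, Pi.single_eq_of_ne hab.symm]
  have hq : y ⬝ᵥ (intLap E A *ᵥ y) = intLap E A a a + intLap E A b b := by
    simp [y, mulVec_sub, hL, hL']
  have hx : (1 : Fin n ⊕ Fin n → ℝ) ≠ 0 := fun h => one_ne_zero (congrFun h a)
  obtain ⟨i, j, hij, hi, hj⟩ := hM.exists_ne_eigenvalues_le hx hy hxy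
    (by rw [intLap_mulVec_one, zero_smul]) (μ := 0) (c := (intLap E A a a + intLap E A b b) / 2)
    (by linarith [intLap_apply_self_nonneg E A a, intLap_apply_self_nonneg E A b])
    (by rw [hq, hyy]; linarith)
  exact sortDesc_sub_two_le (finSumFinEquiv.injective.ne hij) (by simpa using hi)
    (by simpa using hj) hn

/-- for distinct vertices `u, v` of a simple mixed graph `G`:
(i) if no edge joins `u` and `v` then `ν_{2n−1}(G) ≤ (d u + d v + d⁺ u + d⁺ v)/2` and
`ν_{2n−1}(G) ≤ (d u + d v + d⁻ u + d⁻ v)/2`;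
(ii) if there is no arc from `u` to `v` then `ν_{2n−1}(G) ≤ (d u + d v + d⁺ u + d⁻ v)/2`. -/
theorem stmt12 (n : ℕ) (E A : Fin n → Fin n → ℕ) (hE : ∀ u v, E u v = E v u)
    (hS : IsSimple E A) (u v : Fin n) (huv : u ≠ v) :
    (E u v = 0 →
      nuT E A hE ⟨n + n - 2, by have := u.pos; omega⟩ ≤
          ((dU E u + dU E v + dOut A u + dOut A v : ℕ) : ℝ) / 2 ∧
        nuT E A hE ⟨n + n - 2, by have := u.pos; omega⟩ ≤
          ((dU E u + dU E v + dIn A u + dIn A v : ℕ) : ℝ) / 2) ∧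
    (A u v = 0 →
      nuT E A hE ⟨n + n - 2, by have := u.pos; omega⟩ ≤
        ((dU E u + dU E v + dOut A u + dIn A v : ℕ) : ℝ) / 2) := by
  have hn : n + n - 2 < n + n := by have := u.pos; omega
  have hloop := hS.2.2.1
  have bound := @nuT_sub_two_le_of_intLap_eq_zero n E A hE
  refine ⟨fun hEuv => ⟨?_, ?_⟩, fun hAuv => ?_⟩
  · refine (bound (Sum.inl_injective.ne huv) ?_ hn).trans_eq ?_
    · simp [intLap_inl_inl_of_ne _ _ huv, hEuv]
    · simp only [intLap_inl_inl_self, hloop]; push_cast; ring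
  · refine (bound (Sum.inr_injective.ne huv) ?_ hn).trans_eq ?_
    · simp [intLap_inr_inr_of_ne _ _ huv, hEuv]
    · simp only [intLap_inr_inr_self, hloop]; push_cast; ring
  · refine (bound (a := .inl u) (b := .inr v) Sum.inl_ne_inr ?_ hn).trans_eq ?_
    · simp [intLap_inl_inr, hAuv]
    · simp only [intLap_inl_inl_self, intLap_inr_inr_self, hloop]; push_cast; ring
end
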